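/- Splitting lemma for values: a derivation π = Δ ⊢ V : ⊗ᵢ₌₁ⁿ τᵢ exists if and only if Δ = ⊗ᵢ₌₁ⁿ Δᵢ and there exist derivations πᵢ = Δᵢ ⊢ V : τᵢ for each i = 1,…,n; moreover the measures satisfy |π| = Σᵢ |πᵢ|. -/

import Mathlib

-- Computational and parallel types
mutual
  inductive CTy : Type
    | one : CTy
    | tens : CTy → CTy → CTy
    | arr : CTy → PTy → CTy
  inductive PTy : Type
    | ofC : CTy → PTy
    | par : PTy → PTy → PTy
end

-- Type equivalence: AC of ⊗ and ⅋, 1 neutral for ⊗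
mutual
  inductive CEq : CTy → CTy → Prop
    | refl (τ) : CEq τ τ
    | symm : CEq τ ρ → CEq ρ τ
    | trans : CEq τ ρ → CEq ρ σ → CEq τ σ
    | comm (τ ρ) : CEq (.tens τ ρ) (.tens ρ τ)
    | assoc (τ ρ σ) : CEq (.tens (.tens τ ρ) σ) (.tens τ (.tens ρ σ))
    | unit (τ) : CEq (.tens τ .one) τ
    | tensCongr : CEq τ τ' → CEq ρ ρ' → CEq (.tens τ ρ) (.tens τ' ρ')
    | arrCongr : CEq τ τ' → PEq α α' → CEq (.arr τ α) (.arr τ' α')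
  inductive PEq : PTy → PTy → Prop
    | refl (α) : PEq α α
    | symm : PEq α β → PEq β α
    | trans : PEq α β → PEq β γ → PEq α γ
    | comm (α β) : PEq (.par α β) (.par β α)
    | assoc (α β γ) : PEq (.par (.par α β) γ) (.par α (.par β γ))
    | parCongr : PEq α α' → PEq β β' → PEq (.par α β) (.par α' β')
    | ofC : CEq τ τ' → PEq (.ofC τ) (.ofC τ')
end

def Ctx : Type := ℕ → CTy
def Ctx.empty : Ctx := fun _ => CTy.one
def Ctx.tens (Γ Δ : Ctx) : Ctx := fun n => CTy.tens (Γ n) (Δ n)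
def Ctx.single (x : ℕ) (τ : CTy) : Ctx := fun n => if n = x then τ else CTy.one
def Ctx.cons (τ : CTy) (Γ : Ctx) : Ctx := fun n =>
  match n with
  | 0 => τ
  | n+1 => Γ n
def CtxEq (Γ Δ : Ctx) : Prop := ∀ n, CEq (Γ n) (Δ n)

def tensList (l : List CTy) : CTy := l.foldr CTy.tens CTy.one
def tensFin (n : ℕ) (f : Fin n → CTy) : CTy := tensList (List.ofFn f)
def tensCtxFin (n : ℕ) (Δ : Fin n → Ctx) : Ctx := fun x => tensFin n (fun i => Δ i x)

def parList : List PTy → PTy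
  | [] => PTy.ofC CTy.one
  | [α] => α
  | α :: β :: rest => PTy.par α (parList (β :: rest))

def parFin (n : ℕ) (f : Fin n → PTy) : PTy := parList (List.ofFn f)

/-- ⅋ᵏ1 : the par of k copies of 1 (left associated); junk value at 0. -/
def parOnes : ℕ → PTy
  | 0 => PTy.ofC CTy.one
  | 1 => PTy.ofC CTy.one
  | n+2 => PTy.par (parOnes (n+1)) (PTy.ofC CTy.one)

/-- Terms of Λ₊∥ in de Bruijn notation. -/
inductive Tm : Type
  | var : ℕ → Tm
  | lam : Tm → Tm
  | app : Tm → Tm → Tm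
  | plus : Tm → Tm → Tm
  | par : Tm → Tm → Tm

def IsValue : Tm → Prop
  | .var _ => True
  | .lam _ => True
  | _ => False

def IsPar : Tm → Prop
  | .par _ _ => True
  | _ => False

def shiftTm (c : ℕ) : Tm → Tm
  | .var n => if n < c then .var n else .var (n+1)
  | .lam M => .lam (shiftTm (c+1) M)
  | .app M N => .app (shiftTm c M) (shiftTm c N)
  | .plus M N => .plus (shiftTm c M) (shiftTm c N)
  | .par M N => .par (shiftTm c M) (shiftTm c N)

/-- Capture-avoiding substitution `M[V/k]` (de Bruijn). -/
def substTm : Tm → ℕ → Tm → Tm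
  | .var n, k, V => if n = k then V else if k < n then .var (n-1) else .var n
  | .lam M, k, V => .lam (substTm M (k+1) (shiftTm 0 V))
  | .app M N, k, V => .app (substTm M k V) (substTm N k V)
  | .plus M N, k, V => .plus (substTm M k V) (substTm N k V)
  | .par M N, k, V => .par (substTm M k V) (substTm N k V)

def closedUnder : ℕ → Tm → Prop
  | d, .var n => n < d
  | d, .lam M => closedUnder (d+1) M
  | d, .app M N => closedUnder d M ∧ closedUnder d N
  | d, .plus M N => closedUnder d M ∧ closedUnder d N
  | d, .par M N => closedUnder d M ∧ closedUnder d N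

def Closed (M : Tm) : Prop := closedUnder 0 M

/-- One-step reduction; the boolean flag records whether a +-reduction is used. -/
inductive Step : Bool → Tm → Tm → Prop
  | beta {M V} : IsValue V → Step false (.app (.lam M) V) (substTm M 0 V)
  | plusL (M N) : Step true (.plus M N) M
  | plusR (M N) : Step true (.plus M N) N
  | parAppL (M N P) : Step false (.app (.par M N) P) (.par (.app M P) (.app N P))
  | parAppR {V} (M N) : IsValue V → Step false (.app V (.par M N)) (.par (.app V M) (.app V N))
  | parL {b M M'} (N) : Step b M M' → Step b (.par M N) (.par M' N)
  | parR {b N N'} (M) : Step b N N' → Step b (.par M N) (.par M N')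
  | appL {b M M'} (N) : Step b M M' → ¬ IsPar M → Step b (.app M N) (.app M' N)
  | appR {b M M' V} : IsValue V → Step b M M' → ¬ IsPar M → Step b (.app V M) (.app V M')

/-- The two contracta of a single +-redex, reduced in context. -/
inductive PlusPair : Tm → Tm → Tm → Prop
  | base (M N) : PlusPair (.plus M N) M N
  | parL {M M₁ M₂} (N) : PlusPair M M₁ M₂ → PlusPair (.par M N) (.par M₁ N) (.par M₂ N)
  | parR {N N₁ N₂} (M) : PlusPair N N₁ N₂ → PlusPair (.par M N) (.par M N₁) (.par M N₂)
  | appL {M M₁ M₂} (N) : PlusPair M M₁ M₂ → ¬ IsPar M → PlusPair (.app M N) (.app M₁ N) (.app M₂ N)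
  | appR {M M₁ M₂ V} : IsValue V → PlusPair M M₁ M₂ → ¬ IsPar M → PlusPair (.app V M) (.app V M₁) (.app V M₂)

/-- n-step reduction. -/
inductive Steps : ℕ → Tm → Tm → Prop
  | refl (M) : Steps 0 M M
  | head {b M N P n} : Step b M N → Steps n N P → Steps (n+1) M P

/-- A closed term converges iff it reduces to a parallel composition of values. -/
def Converges (M : Tm) : Prop :=
  ∃ (n : ℕ) (V : Tm) (Vs : List Tm), IsValue V ∧ (∀ W ∈ Vs, IsValue W) ∧
    Steps n M (Vs.foldl Tm.par V)

/-- Typing derivations, indexed by the measure |π|. -/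
inductive Deriv : Ctx → Tm → PTy → ℕ → Prop
  | ax (x : ℕ) (τ : CTy) : Deriv (Ctx.single x τ) (.var x) (.ofC τ) 0
  | lamI (n : ℕ) (Δ : Fin n → Ctx) (τ : Fin n → CTy) (α : Fin n → PTy) (ms : Fin n → ℕ)
      (M : Tm) :
      (∀ i, Deriv (Ctx.cons (τ i) (Δ i)) M (α i) (ms i)) →
      Deriv (tensCtxFin n Δ) (.lam M)
        (.ofC (tensFin n (fun i => .arr (τ i) (α i)))) (∑ i, ms i)
  | appE (k : ℕ) (hk : 0 < k) (nf : Fin k → ℕ) (hn : ∀ i, 0 < nf i)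
      (τ : ∀ i : Fin k, Fin (nf i) → CTy) (α : ∀ i : Fin k, Fin (nf i) → PTy)
      (Δ : Ctx) (Γ : Fin k → Ctx) (m0 : ℕ) (ms : Fin k → ℕ) (M N : Tm) :
      Deriv Δ M (parFin k (fun i => .ofC (tensFin (nf i) (fun j => .arr (τ i j) (α i j))))) m0 →
      (∀ i, Deriv (Γ i) N (parFin (nf i) (fun j => .ofC (τ i j))) (ms i)) →
      Deriv (Ctx.tens Δ (tensCtxFin k Γ)) (.app M N)
        (parFin k (fun i => parFin (nf i) (α i)))
        ((m0 + (∑ i, ms i) + (∑ i, 2 * nf i)) - 1)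
  | plusL {Δ M α m} (N) : Deriv Δ M α m → Deriv Δ (.plus M N) α (m+1)
  | plusR {Δ N α m} (M) : Deriv Δ N α m → Deriv Δ (.plus M N) α (m+1)
  | parI {Δ Γ M N α β m m'} : Deriv Δ M α m → Deriv Γ N β m' →
      Deriv (Ctx.tens Δ Γ) (.par M N) (.par α β) (m + m')
  | eqv {Γ Γ' M α α' m} : Deriv Γ M α m → CtxEq Γ Γ' → PEq α α' → Deriv Γ' M α' m

def deltaTm : Tm := .lam (.app (.var 0) (.var 0))
def OmegaTm : Tm := .app deltaTm deltaTm
def Idt : Tm := .lam (.var 0)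
def dstarTm : Tm := .lam (.lam (.app (.var 1) (.var 1)))
def YstarTm : Tm := .app dstarTm dstarTm

/-!
Up to `CEq`, computational types form a commutative monoid under `⊗` in which every type is the
product of its arrow leaves, and the multiset of classes of leaves is invariant under `CEq`; hence
`CEq σ ρ` holds exactly when `σ` and `ρ` have the same leaves. Up to the equivalence rule, a
derivation of a value is either an axiom, whose context `x : σ ⊗ ρ` splits pointwise, or a single
`⊸I` concluding a tensor of arrows, one per premise. Typing it with `σ ⊗ ρ` therefore partitions
the premises according to the leaves of `σ` and of `ρ`, and context and measure split along that
partition. Induction on `n` gives the `n`-ary statement.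
-/

instance CTy.setoid : Setoid CTy := ⟨CEq, ⟨CEq.refl, CEq.symm, CEq.trans⟩⟩

abbrev CTyClass : Type := Quotient CTy.setoid

instance : CommMonoid CTyClass where
  mul := Quotient.map₂ CTy.tens fun _ _ h₁ _ _ h₂ => CEq.tensCongr h₁ h₂
  one := ⟦CTy.one⟧
  mul_assoc := by rintro ⟨a⟩ ⟨b⟩ ⟨c⟩; exact Quotient.sound (CEq.assoc a b c)
  one_mul := by rintro ⟨a⟩; exact Quotient.sound ((CEq.comm _ _).trans (CEq.unit a))
  mul_one := by rintro ⟨a⟩; exact Quotient.sound (CEq.unit a)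
  mul_comm := by rintro ⟨a⟩ ⟨b⟩; exact Quotient.sound (CEq.comm a b)

theorem CTyClass.mk_eq_mk_iff {σ ρ : CTy} : (⟦σ⟧ : CTyClass) = ⟦ρ⟧ ↔ CEq σ ρ := Quotient.eq

theorem CTyClass.mk_tens (σ ρ : CTy) : (⟦σ.tens ρ⟧ : CTyClass) = ⟦σ⟧ * ⟦ρ⟧ := rfl

theorem CTyClass.mk_tensList (l : List CTy) :
    (⟦tensList l⟧ : CTyClass) = (l.map (⟦·⟧)).prod := by
  induction l with
  | nil => rfl
  | cons σ l ih => rw [List.map_cons, List.prod_cons, ← ih]; rfl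

def CTy.leaves : CTy → Multiset CTyClass
  | .one => 0
  | .tens σ ρ => σ.leaves + ρ.leaves
  | .arr τ α => {⟦.arr τ α⟧}

theorem CTy.prod_leaves : ∀ σ : CTy, σ.leaves.prod = ⟦σ⟧
  | .one => rfl
  | .tens σ ρ => by rw [leaves, Multiset.prod_add, σ.prod_leaves, ρ.prod_leaves]; rfl
  | .arr _ _ => Multiset.prod_singleton _

theorem CEq.leaves_eq : ∀ {σ ρ : CTy}, CEq σ ρ → σ.leaves = ρ.leaves
  | _, _, .refl _ => rfl
  | _, _, .symm h => h.leaves_eq.symm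
  | _, _, .trans h₁ h₂ => h₁.leaves_eq.trans h₂.leaves_eq
  | _, _, .comm _ _ => add_comm _ _
  | _, _, .assoc _ _ _ => add_assoc _ _ _
  | _, _, .unit _ => add_zero _
  | _, _, .tensCongr h₁ h₂ => congrArg₂ (· + ·) h₁.leaves_eq h₂.leaves_eq
  | _, _, .arrCongr h₁ h₂ => congrArg ({·}) (CTyClass.mk_eq_mk_iff.2 (h₁.arrCongr h₂))

theorem ceq_iff_leaves_eq {σ ρ : CTy} : CEq σ ρ ↔ σ.leaves = ρ.leaves :=
  ⟨CEq.leaves_eq, fun h => CTyClass.mk_eq_mk_iff.1 <| by rw [← σ.prod_leaves, h, ρ.prod_leaves]⟩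

def PTy.components : PTy → Multiset CTyClass
  | .ofC τ => {⟦τ⟧}
  | .par α β => α.components + β.components

theorem PEq.components_eq : ∀ {α β : PTy}, PEq α β → α.components = β.components
  | _, _, .refl _ => rfl
  | _, _, .symm h => h.components_eq.symm
  | _, _, .trans h₁ h₂ => h₁.components_eq.trans h₂.components_eq
  | _, _, .comm _ _ => add_comm _ _
  | _, _, .assoc _ _ _ => add_assoc _ _ _
  | _, _, .parCongr h₁ h₂ => congrArg₂ (· + ·) h₁.components_eq h₂.components_eq
  | _, _, .ofC h => congrArg ({·}) (CTyClass.mk_eq_mk_iff.2 h)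

theorem ceq_of_peq_ofC {τ σ : CTy} (h : PEq (.ofC τ) (.ofC σ)) : CEq τ σ :=
  CTyClass.mk_eq_mk_iff.1 <| Multiset.singleton_inj.1 h.components_eq

theorem CtxEq.refl (Γ : Ctx) : CtxEq Γ Γ := fun _ => CEq.refl _

theorem CtxEq.symm {Γ Δ : Ctx} (h : CtxEq Γ Δ) : CtxEq Δ Γ := fun x => (h x).symm

theorem CtxEq.trans {Γ Δ Θ : Ctx} (h : CtxEq Γ Δ) (h' : CtxEq Δ Θ) : CtxEq Γ Θ :=
  fun x => (h x).trans (h' x)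

theorem CtxEq.tens {Γ Γ' Δ Δ' : Ctx} (hΓ : CtxEq Γ Γ') (hΔ : CtxEq Δ Δ') :
    CtxEq (Γ.tens Δ) (Γ'.tens Δ') :=
  fun x => (hΓ x).tensCongr (hΔ x)

theorem Ctx.single_one (x : ℕ) : Ctx.single x .one = Ctx.empty :=
  funext fun _ => ite_self _

theorem Ctx.single_tens (x : ℕ) (σ ρ : CTy) :
    CtxEq (Ctx.single x (σ.tens ρ)) ((Ctx.single x σ).tens (Ctx.single x ρ)) := by
  intro y
  by_cases hy : y = x
  · simp only [Ctx.single, Ctx.tens, hy, if_true]; exact CEq.refl _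
  · simp only [Ctx.single, Ctx.tens, hy, if_false]; exact (CEq.unit _).symm

theorem tensList_perm {l l' : List CTy} (h : l.Perm l') : CEq (tensList l) (tensList l') :=
  CTyClass.mk_eq_mk_iff.1 <| by simp only [CTyClass.mk_tensList, (h.map _).prod_eq]

theorem tensList_append (l l' : List CTy) :
    CEq (tensList (l ++ l')) ((tensList l).tens (tensList l')) :=
  CTyClass.mk_eq_mk_iff.1 <| by
    simp only [CTyClass.mk_tens, CTyClass.mk_tensList, List.map_append, List.prod_append]

def tensCtxList (Γs : List Ctx) : Ctx := fun x => tensList (Γs.map (· x))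

theorem tensCtxList_perm {Γs Γs' : List Ctx} (h : Γs.Perm Γs') :
    CtxEq (tensCtxList Γs) (tensCtxList Γs') :=
  fun _ => tensList_perm (h.map _)

theorem tensCtxList_append (Γs Γs' : List Ctx) :
    CtxEq (tensCtxList (Γs ++ Γs')) ((tensCtxList Γs).tens (tensCtxList Γs')) :=
  fun x => by simp only [tensCtxList, List.map_append]; exact tensList_append _ _

theorem tensFin_zero (f : Fin 0 → CTy) : tensFin 0 f = .one := rfl

theorem tensFin_succ {n : ℕ} (f : Fin (n + 1) → CTy) :
    tensFin (n + 1) f = .tens (f 0) (tensFin n fun i => f i.succ) := by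
  rw [tensFin, List.ofFn_succ]; rfl

theorem tensCtxFin_succ {n : ℕ} (Δs : Fin (n + 1) → Ctx) :
    tensCtxFin (n + 1) Δs = (Δs 0).tens (tensCtxFin n fun i => Δs i.succ) :=
  funext fun _ => tensFin_succ _

theorem Deriv.var_inv {Δ : Ctx} {x : ℕ} {β : PTy} {m : ℕ} {σ : CTy}
    (h : Deriv Δ (.var x) β m) (hβ : PEq β (.ofC σ)) : m = 0 ∧ CtxEq Δ (Ctx.single x σ) := by
  generalize hW : Tm.var x = W at h
  induction h generalizing σ with
  | ax y τ =>
    cases hW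
    refine ⟨rfl, fun z => ?_⟩
    by_cases hz : z = x
    · simpa only [Ctx.single, hz, if_true] using ceq_of_peq_ofC hβ
    · simpa only [Ctx.single, hz, if_false] using CEq.refl _
  | eqv _ hΓ hα ih =>
    obtain ⟨hm, hΔ⟩ := ih (hα.trans hβ) hW
    exact ⟨hm, hΓ.symm.trans hΔ⟩
  | _ => cases hW

theorem deriv_var_iff {Δ : Ctx} {x : ℕ} {σ : CTy} {m : ℕ} :
    Deriv Δ (.var x) (.ofC σ) m ↔ m = 0 ∧ CtxEq Δ (Ctx.single x σ) :=
  ⟨fun h => h.var_inv (PEq.refl _), fun ⟨hm, hΔ⟩ => hm ▸ (Deriv.ax x σ).eqv hΔ.symm (PEq.refl _)⟩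

structure LamPremise where
  ctx : Ctx
  dom : CTy
  cod : PTy
  size : ℕ

def LamPremise.arrow (p : LamPremise) : CTy := .arr p.dom p.cod

def LamPremise.Derivable (M : Tm) (p : LamPremise) : Prop :=
  Deriv (Ctx.cons p.dom p.ctx) M p.cod p.size

theorem deriv_lam_of_list {M : Tm} (L : List LamPremise) (h : ∀ p ∈ L, p.Derivable M) :
    Deriv (tensCtxList (L.map (·.ctx))) (.lam M) (.ofC (tensList (L.map (·.arrow))))
      (L.map (·.size)).sum := by
  have hL := Deriv.lamI L.length (fun i => L[(i : ℕ)].ctx) (fun i => L[(i : ℕ)].dom)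
    (fun i => L[(i : ℕ)].cod) (fun i => L[(i : ℕ)].size) M fun i => h _ (List.getElem_mem i.isLt)
  have hctx : tensCtxFin L.length (fun i => L[(i : ℕ)].ctx) = tensCtxList (L.map (·.ctx)) :=
    funext fun x => congrArg tensList <| by
      rw [List.map_map]; exact List.ofFn_getElem_eq_map L (·.ctx x)
  have harr : tensFin L.length (fun i => .arr L[(i : ℕ)].dom L[(i : ℕ)].cod) =
      tensList (L.map (·.arrow)) :=
    congrArg tensList (List.ofFn_getElem_eq_map L LamPremise.arrow)
  rwa [hctx, harr, ← List.sum_ofFn, List.ofFn_getElem_eq_map] at hL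

theorem Deriv.lam_inv {Δ : Ctx} {M : Tm} {β : PTy} {m : ℕ} {σ : CTy}
    (h : Deriv Δ (.lam M) β m) (hβ : PEq β (.ofC σ)) :
    ∃ L : List LamPremise, (∀ p ∈ L, p.Derivable M) ∧ CtxEq Δ (tensCtxList (L.map (·.ctx))) ∧
      CEq (tensList (L.map (·.arrow))) σ ∧ m = (L.map (·.size)).sum := by
  generalize hW : Tm.lam M = W at h
  induction h generalizing σ with
  | lamI n Δs τ α ms N hN =>
    cases hW
    refine ⟨List.ofFn fun i => ⟨Δs i, τ i, α i, ms i⟩, ?_, ?_, ?_, ?_⟩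
    · exact List.forall_mem_ofFn_iff.2 hN
    · intro x
      simp only [tensCtxList, List.map_ofFn]
      exact CEq.refl _
    · rw [List.map_ofFn]
      exact ceq_of_peq_ofC hβ
    · simp only [List.map_ofFn, List.sum_ofFn]; rfl
  | eqv _ hΓ hα ih =>
    obtain ⟨L, hL, hΔ, hσ, hm⟩ := ih (hα.trans hβ) hW
    exact ⟨L, hL, hΓ.symm.trans hΔ, hσ, hm⟩
  | _ => cases hW

theorem deriv_lam_iff {Δ : Ctx} {M : Tm} {σ : CTy} {m : ℕ} :
    Deriv Δ (.lam M) (.ofC σ) m ↔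
      ∃ L : List LamPremise, (∀ p ∈ L, p.Derivable M) ∧ CtxEq Δ (tensCtxList (L.map (·.ctx))) ∧
        CEq (tensList (L.map (·.arrow))) σ ∧ m = (L.map (·.size)).sum := by
  refine ⟨fun h => h.lam_inv (PEq.refl _), ?_⟩
  rintro ⟨L, hL, hΔ, hσ, rfl⟩
  exact (deriv_lam_of_list L hL).eqv hΔ.symm (PEq.ofC hσ)

theorem LamPremise.leaves_tensList_arrow (L : List LamPremise) :
    (tensList (L.map (·.arrow))).leaves = ↑(L.map fun p => (⟦p.arrow⟧ : CTyClass)) := by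
  induction L with
  | nil => rfl
  | cons p L ih =>
    rw [List.map_cons, List.map_cons, ← Multiset.cons_coe, ← ih, ← Multiset.singleton_add]
    rfl

theorem List.exists_perm_append_of_coe_map_eq_add {α β : Type*} (f : α → β) :
    ∀ (L : List α) {s₁ s₂ : Multiset β}, (L.map f : Multiset β) = s₁ + s₂ →
      ∃ L₁ L₂ : List α, L.Perm (L₁ ++ L₂) ∧ (L₁.map f : Multiset β) = s₁ ∧
        (L₂.map f : Multiset β) = s₂
  | [], s₁, s₂, h => by
    obtain ⟨rfl, rfl⟩ := add_eq_zero.1 h.symm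
    exact ⟨[], [], List.Perm.refl _, rfl, rfl⟩
  | a :: L, s₁, s₂, h => by
    rw [List.map_cons, ← Multiset.cons_coe] at h
    rcases Multiset.mem_add.1 (h ▸ Multiset.mem_cons_self _ _ : f a ∈ s₁ + s₂) with h₁ | h₂
    · obtain ⟨t₁, rfl⟩ := Multiset.exists_cons_of_mem h₁
      rw [Multiset.cons_add, Multiset.cons_inj_right] at h
      obtain ⟨L₁, L₂, hL, rfl, rfl⟩ := exists_perm_append_of_coe_map_eq_add f L h
      exact ⟨a :: L₁, L₂, hL.cons a, rfl, rfl⟩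
    · obtain ⟨t₂, rfl⟩ := Multiset.exists_cons_of_mem h₂
      rw [Multiset.add_cons, Multiset.cons_inj_right] at h
      obtain ⟨L₁, L₂, hL, rfl, rfl⟩ := exists_perm_append_of_coe_map_eq_add f L h
      exact ⟨L₁, a :: L₂, (hL.cons a).trans List.perm_middle.symm, rfl, rfl⟩

theorem deriv_value_one_iff {V : Tm} (hV : IsValue V) {Δ : Ctx} {m : ℕ} :
    Deriv Δ V (.ofC .one) m ↔ m = 0 ∧ CtxEq Δ Ctx.empty := by
  cases V with
  | var x => rw [deriv_var_iff, Ctx.single_one]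
  | lam M =>
    rw [deriv_lam_iff]
    constructor
    · rintro ⟨L, -, hΔ, hone, rfl⟩
      have hL : L = [] := by
        simpa only [ceq_iff_leaves_eq, LamPremise.leaves_tensList_arrow, CTy.leaves,
          Multiset.coe_eq_zero, List.map_eq_nil_iff] using hone
      subst hL
      exact ⟨rfl, hΔ⟩
    · rintro ⟨rfl, hΔ⟩
      exact ⟨[], List.forall_mem_nil _, hΔ, CEq.refl _, rfl⟩
  | _ => exact hV.elim

theorem Deriv.tens_of_isValue {V : Tm} (hV : IsValue V) {Δ₁ Δ₂ : Ctx} {σ ρ : CTy}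
    {m₁ m₂ : ℕ} (h₁ : Deriv Δ₁ V (.ofC σ) m₁) (h₂ : Deriv Δ₂ V (.ofC ρ) m₂) :
    Deriv (Δ₁.tens Δ₂) V (.ofC (σ.tens ρ)) (m₁ + m₂) := by
  cases V with
  | var x =>
    obtain ⟨rfl, hΔ₁⟩ := deriv_var_iff.1 h₁
    obtain ⟨rfl, hΔ₂⟩ := deriv_var_iff.1 h₂
    exact deriv_var_iff.2 ⟨rfl, (hΔ₁.tens hΔ₂).trans (Ctx.single_tens x σ ρ).symm⟩
  | lam M =>
    obtain ⟨L₁, hL₁, hΔ₁, hσ, rfl⟩ := deriv_lam_iff.1 h₁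
    obtain ⟨L₂, hL₂, hΔ₂, hρ, rfl⟩ := deriv_lam_iff.1 h₂
    refine deriv_lam_iff.2 ⟨L₁ ++ L₂, List.forall_mem_append.2 ⟨hL₁, hL₂⟩, ?_, ?_, ?_⟩
    · rw [List.map_append]
      exact (hΔ₁.tens hΔ₂).trans (tensCtxList_append _ _).symm
    · rw [List.map_append]
      exact (tensList_append _ _).trans (hσ.tensCongr hρ)
    · rw [List.map_append, List.sum_append]
  | _ => exact hV.elim

theorem Deriv.exists_split_of_isValue {V : Tm} (hV : IsValue V) {Δ : Ctx} {σ ρ : CTy} {m : ℕ}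
    (h : Deriv Δ V (.ofC (σ.tens ρ)) m) :
    ∃ (Δ₁ Δ₂ : Ctx) (m₁ m₂ : ℕ), CtxEq Δ (Δ₁.tens Δ₂) ∧
      Deriv Δ₁ V (.ofC σ) m₁ ∧ Deriv Δ₂ V (.ofC ρ) m₂ ∧ m = m₁ + m₂ := by
  cases V with
  | var x =>
    obtain ⟨rfl, hΔ⟩ := deriv_var_iff.1 h
    exact ⟨_, _, 0, 0, hΔ.trans (Ctx.single_tens x σ ρ), .ax x σ, .ax x ρ, rfl⟩
  | lam M =>
    obtain ⟨L, hL, hΔ, hσρ, rfl⟩ := deriv_lam_iff.1 h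
    rw [ceq_iff_leaves_eq, LamPremise.leaves_tensList_arrow] at hσρ
    obtain ⟨L₁, L₂, hperm, hσ, hρ⟩ := List.exists_perm_append_of_coe_map_eq_add _ L hσρ
    have hL₁₂ : ∀ p ∈ L₁ ++ L₂, p.Derivable M := fun p hp => hL p (hperm.mem_iff.2 hp)
    rw [List.forall_mem_append] at hL₁₂
    refine ⟨_, _, _, _, ?_,
      deriv_lam_iff.2 ⟨L₁, hL₁₂.1, CtxEq.refl _, ?_, rfl⟩,
      deriv_lam_iff.2 ⟨L₂, hL₁₂.2, CtxEq.refl _, ?_, rfl⟩, ?_⟩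
    · refine hΔ.trans ((tensCtxList_perm (hperm.map _)).trans ?_)
      rw [List.map_append]
      exact tensCtxList_append _ _
    · rw [ceq_iff_leaves_eq, LamPremise.leaves_tensList_arrow, hσ]
    · rw [ceq_iff_leaves_eq, LamPremise.leaves_tensList_arrow, hρ]
    · rw [(hperm.map _).sum_eq, List.map_append, List.sum_append]
  | _ => exact hV.elim

theorem value_tensor_splitting (V : Tm) (hV : IsValue V) (n : ℕ) (τ : Fin n → CTy)
    (Δ : Ctx) (m : ℕ) :
    Deriv Δ V (.ofC (tensFin n τ)) m ↔
      ∃ (Δs : Fin n → Ctx) (ms : Fin n → ℕ),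
        CtxEq Δ (tensCtxFin n Δs) ∧ (∀ i, Deriv (Δs i) V (.ofC (τ i)) (ms i)) ∧
        m = ∑ i, ms i := by
  induction n generalizing Δ m with
  | zero =>
    rw [tensFin_zero, deriv_value_one_iff hV]
    constructor
    · rintro ⟨rfl, hΔ⟩
      exact ⟨Fin.elim0, Fin.elim0, hΔ, nofun, rfl⟩
    · rintro ⟨_, ms, hΔ, -, rfl⟩
      exact ⟨Fin.sum_univ_zero ms, hΔ⟩
  | succ n ih =>
    rw [tensFin_succ]
    constructor
    · intro h
      obtain ⟨Δ₁, Δ₂, m₁, m₂, hΔ, h₁, h₂, rfl⟩ := h.exists_split_of_isValue hV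
      obtain ⟨Δs, ms, hΔ₂, hs, rfl⟩ := (ih _ Δ₂ m₂).1 h₂
      refine ⟨Fin.cons Δ₁ Δs, Fin.cons m₁ ms, ?_, Fin.cases h₁ hs, (Fin.sum_cons m₁ ms).symm⟩
      rw [tensCtxFin_succ]
      exact hΔ.trans ((CtxEq.refl Δ₁).tens hΔ₂)
    · rintro ⟨Δs, ms, hΔ, hs, rfl⟩
      have htail := (ih _ _ _).2 ⟨_, _, CtxEq.refl _, fun i => hs i.succ, rfl⟩
      rw [tensCtxFin_succ] at hΔ
      rw [Fin.sum_univ_succ]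
      exact ((hs 0).tens_of_isValue hV htail).eqv hΔ.symm (PEq.refl _)
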